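/- arXiv:2009.05150 — 2 statements merged into one kernel-verified Lean document; each statement's English description precedes it below -/
import Mathlib

section
/- Let (X_i)_{i ∈ I_{∞,K}} be a jointly exchangeable mean-zero K-array, symmetric in the components of its index, with Hájek projections W_j = Σ_{k=1}^K h_k(U_j), h_k(u) = E[X_{(1,...,K)} | U_k = u]. Then the covariance matrix Σ = E[W_1 W_1^T] equals K² E[X̌_{(1,...,K)} X̌_{(1,K+1,...,2K)}^T], where X̌_i denotes the symmetrization X̌_{(i_1,...,i_K)} = (K!)^{-1} Σ_{permutations (i_1',...,i_K')} X_{(i_1',...,i_K')}. -/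
open MeasureTheory ProbabilityTheory
open scoped BigOperators ENNReal NNReal

/-!
By the symmetry of `X`, every summand of `W₁` is `E[X_{(1,…,K)} | U_{{1}}]` and every term of
a symmetrization is the unsymmetrized array, so both sides carry the factor `K²` and it remains
to show `E[E[Y₀ | Z] E[Y₀ | Z]ᵀ] = E[Y₀ Y₁ᵀ]` for `Y₀ = X_{(1,…,K)}`, `Y₁ = X_{(1,K+1,…,2K-1)}`
and `Z = U_{{1}}`. The two index tuples share only their first coordinate, so
`Yₐ = G(Z, Vₐ)` where `Vₐ` collects the remaining latent variables of `Yₐ`, and `Z`, `V₀`, `V₁`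
are independent with `V₀ ∼ V₁`. Given `Z = z`, `Y₀` and `Y₁` are then independent with common
mean `Φ(z) = ∫ G(z, v) dν(v)`, while `E[Y₀ | Z] = Φ(Z)`; Fubini gives both sides as
`∫ Φ Φᵀ d(law Z)`.
-/

lemma Finset.eq_singleton_of_image_eq_image {N M ι : Type*} [DecidableEq ι] {i : N → ι}
    {i' : M → ι} {k₀ : N} {e : Finset N} {e' : Finset M} (he : e.Nonempty)
    (hii' : ∀ a ∈ e, ∀ b ∈ e', i a = i' b → a = k₀) (h : e.image i = e'.image i') :
    e = {k₀} := by
  refine he.subset_singleton_iff.mp fun a ha ↦ Finset.mem_singleton.mpr ?_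
  obtain ⟨b, hb, hab⟩ := Finset.mem_image.mp (h ▸ Finset.mem_image_of_mem i ha)
  exact hii' a ha b hb hab.symm

lemma integral_prod_prod_mul_eq_integral_mul_integral {α β : Type*} [MeasurableSpace α]
    [MeasurableSpace β] {ρ : Measure α} {ν : Measure β}
    [SFinite ρ] [SFinite ν] {f g : α × β → ℝ}
    (hfg : Integrable (fun q : α × β × β ↦ f (q.1, q.2.1) * g (q.1, q.2.2)) (ρ.prod (ν.prod ν))) :
    ∫ q, f (q.1, q.2.1) * g (q.1, q.2.2) ∂ρ.prod (ν.prod ν)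
      = ∫ z, (∫ y, f (z, y) ∂ν) * ∫ y, g (z, y) ∂ν ∂ρ := by
  rw [integral_prod _ hfg]
  exact integral_congr_ae (.of_forall fun z ↦
    integral_prod_mul (fun y ↦ f (z, y)) (fun y ↦ g (z, y)))

namespace ProbabilityTheory

variable {Ω α β : Type*} {mΩ : MeasurableSpace Ω} {μ : Measure Ω}
  {mα : MeasurableSpace α} {mβ : MeasurableSpace β}

lemma condDistrib_ae_eq_const_of_indepFun [IsProbabilityMeasure μ] [StandardBorelSpace β]
    [Nonempty β]
    {X : Ω → α} {Y : Ω → β} (hX : Measurable X) (hY : Measurable Y) (hXY : IndepFun X Y μ) :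
    condDistrib Y X μ =ᵐ[μ.map X] Kernel.const α (μ.map Y) := by
  refine condDistrib_ae_eq_of_measure_eq_compProd X hY.aemeasurable ?_
  rw [Measure.compProd_const,
    (indepFun_iff_map_prod_eq_prod_map_map hX.aemeasurable hY.aemeasurable).mp hXY]

lemma condExp_comp_prodMk_ae_eq_integral_of_indepFun {F : Type*} [NormedAddCommGroup F]
    [NormedSpace ℝ F] [CompleteSpace F] [IsProbabilityMeasure μ] [StandardBorelSpace β]
    [Nonempty β]
    {X : Ω → α} {Y : Ω → β} (hX : Measurable X) (hY : Measurable Y) (hXY : IndepFun X Y μ)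
    {f : α × β → F} (hf : StronglyMeasurable f) (hf_int : Integrable (fun ω ↦ f (X ω, Y ω)) μ) :
    μ[fun ω ↦ f (X ω, Y ω) | mα.comap X] =ᵐ[μ] fun ω ↦ ∫ y, f (X ω, y) ∂(μ.map Y) := by
  filter_upwards [condExp_prod_ae_eq_integral_condDistrib hX hY.aemeasurable hf hf_int,
    ae_of_ae_map hX.aemeasurable (condDistrib_ae_eq_const_of_indepFun hX hY hXY)] with ω h hconst
  rw [h, hconst, Kernel.const_apply]

lemma iIndepFun.map_comp_eq_pi [IsProbabilityMeasure μ] {ι N : Type*} [Fintype N]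
    {U : ι → Ω → β} (hU : iIndepFun U μ) (hUmeas : ∀ A, Measurable (U A)) {κ : N → ι}
    (hκ : κ.Injective) :
    μ.map (fun ω n ↦ U (κ n) ω) = Measure.pi fun n ↦ μ.map (U (κ n)) :=
  (iIndepFun_iff_map_fun_eq_pi_map fun n ↦ (hUmeas (κ n)).aemeasurable).mp (hU.precomp hκ)

lemma iIndepFun.indepFun_comp_of_disjoint_range {ι S T : Type*} [Fintype S] [Fintype T]
    {U : ι → Ω → β} (hU : iIndepFun U μ) (hUmeas : ∀ A, Measurable (U A)) {κ : S → ι}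
    {τ : T → ι} (hκτ : Disjoint (Set.range κ) (Set.range τ)) :
    IndepFun (fun ω s ↦ U (κ s) ω) (fun ω t ↦ U (τ t) ω) μ := by
  classical
  have hdisj : Disjoint (Finset.univ.image κ) (Finset.univ.image τ) := by
    rw [← Finset.disjoint_coe]; simpa using hκτ
  exact (hU.indepFun_finset _ _ hdisj hUmeas).comp
    (measurable_pi_lambda _ fun s ↦ measurable_pi_apply
      (⟨κ s, Finset.mem_image_of_mem _ (Finset.mem_univ s)⟩ : (Finset.univ.image κ : Finset ι)))
    (measurable_pi_lambda _ fun t ↦ measurable_pi_apply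
      (⟨τ t, Finset.mem_image_of_mem _ (Finset.mem_univ t)⟩ : (Finset.univ.image τ : Finset ι)))

lemma iIndepFun.indepFun_prodMk_of_notMem_range {ι S T : Type*} [Fintype S] [Fintype T]
    {U : ι → Ω → β} (hU : iIndepFun U μ) (hUmeas : ∀ A, Measurable (U A)) {c : ι} {κ : S → ι}
    {τ : T → ι} (hκ : c ∉ Set.range κ) (hτ : c ∉ Set.range τ) :
    IndepFun (U c) (fun ω ↦ (fun s ↦ U (κ s) ω, fun t ↦ U (τ t) ω)) μ := by
  have hdisj : Disjoint (Set.range fun _ : Unit ↦ c) (Set.range (Sum.elim κ τ)) := by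
    rw [Set.range_const, Set.disjoint_singleton_left, Set.Sum.elim_range]
    exact fun h ↦ h.elim hκ hτ
  exact (hU.indepFun_comp_of_disjoint_range hUmeas hdisj).comp (measurable_pi_apply ())
    ((measurable_pi_lambda _ fun s ↦ measurable_pi_apply (Sum.inl s)).prodMk
      (measurable_pi_lambda _ fun t ↦ measurable_pi_apply (Sum.inr t)))

theorem integral_condExp_mul_condExp_eq_integral_mul_of_indepFun {ι : Type*} [Fintype ι]
    [IsProbabilityMeasure μ] [StandardBorelSpace β] [Nonempty β] {Z : Ω → α} {V₀ V₁ : Ω → β}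
    (hZ : Measurable Z) (hV₀ : Measurable V₀) (hV₁ : Measurable V₁)
    (hZV : IndepFun Z (fun ω ↦ (V₀ ω, V₁ ω)) μ) (hV : IndepFun V₀ V₁ μ)
    (hlaw : μ.map V₀ = μ.map V₁) {G : α × β → ι → ℝ} (hG : Measurable G)
    (hG₀ : MemLp (fun ω ↦ G (Z ω, V₀ ω)) 2 μ) (hG₁ : MemLp (fun ω ↦ G (Z ω, V₁ ω)) 2 μ)
    (j l : ι) :
    ∫ ω, μ[fun ω ↦ G (Z ω, V₀ ω) | mα.comap Z] ω j *
        μ[fun ω ↦ G (Z ω, V₀ ω) | mα.comap Z] ω l ∂μ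
      = ∫ ω, G (Z ω, V₀ ω) j * G (Z ω, V₁ ω) l ∂μ := by
  set ν := μ.map V₀
  have hV₀₁ : Measurable fun ω ↦ (V₀ ω, V₁ ω) := hV₀.prodMk hV₁
  have hlaw₀ : μ.map (fun ω ↦ (Z ω, V₀ ω)) = (μ.map Z).prod ν :=
    (indepFun_iff_map_prod_eq_prod_map_map hZ.aemeasurable hV₀.aemeasurable).mp
      (hZV.comp measurable_id measurable_fst)
  have hlaw₀₁ : μ.map (fun ω ↦ (Z ω, V₀ ω, V₁ ω)) = (μ.map Z).prod (ν.prod ν) := by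
    rw [(indepFun_iff_map_prod_eq_prod_map_map hZ.aemeasurable hV₀₁.aemeasurable).mp hZV,
      (indepFun_iff_map_prod_eq_prod_map_map hV₀.aemeasurable hV₁.aemeasurable).mp hV, ← hlaw]
  have hsection : ∀ᵐ z ∂μ.map Z, Integrable (fun y ↦ G (z, y)) ν := by
    have : Integrable G ((μ.map Z).prod ν) := by
      rw [← hlaw₀]
      exact (integrable_map_measure hG.aestronglyMeasurable (hZ.prodMk hV₀).aemeasurable).mpr
        (hG₀.integrable one_le_two)
    exact this.prod_right_ae
  have hprod : Integrable (fun ω ↦ G (Z ω, V₀ ω) j * G (Z ω, V₁ ω) l) μ :=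
    (hG₀.eval j).integrable_mul (hG₁.eval l)
  have hΦ : StronglyMeasurable fun z ↦ ∫ y, G (z, y) ∂ν :=
    hG.stronglyMeasurable.integral_prod_right'
  have hF : Measurable fun q : α × β × β ↦ G (q.1, q.2.1) j * G (q.1, q.2.2) l := by fun_prop
  calc ∫ ω, μ[fun ω ↦ G (Z ω, V₀ ω) | mα.comap Z] ω j *
        μ[fun ω ↦ G (Z ω, V₀ ω) | mα.comap Z] ω l ∂μ
      = ∫ ω, (∫ y, G (Z ω, y) ∂ν) j * (∫ y, G (Z ω, y) ∂ν) l ∂μ := by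
        refine integral_congr_ae ?_
        filter_upwards [condExp_comp_prodMk_ae_eq_integral_of_indepFun hZ hV₀
          (hZV.comp measurable_id measurable_fst) hG.stronglyMeasurable (hG₀.integrable one_le_two)]
          with ω h
        rw [h]
    _ = ∫ z, (∫ y, G (z, y) ∂ν) j * (∫ y, G (z, y) ∂ν) l ∂μ.map Z := by
        have hΦjl : StronglyMeasurable fun z ↦ (∫ y, G (z, y) ∂ν) j * (∫ y, G (z, y) ∂ν) l :=
          ((continuous_apply j).comp_stronglyMeasurable hΦ).mul
            ((continuous_apply l).comp_stronglyMeasurable hΦ)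
        rw [integral_map hZ.aemeasurable hΦjl.aestronglyMeasurable]
    _ = ∫ z, (∫ y, G (z, y) j ∂ν) * (∫ y, G (z, y) l ∂ν) ∂μ.map Z := by
        refine integral_congr_ae ?_
        filter_upwards [hsection] with z hz
        rw [eval_integral hz.eval, eval_integral hz.eval]
    _ = ∫ q, G (q.1, q.2.1) j * G (q.1, q.2.2) l ∂(μ.map Z).prod (ν.prod ν) := by
        refine (integral_prod_prod_mul_eq_integral_mul_integral
          (f := fun q ↦ G q j) (g := fun q ↦ G q l) ?_).symm
        rw [← hlaw₀₁]
        exact (integrable_map_measure hF.aestronglyMeasurable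
          (hZ.prodMk hV₀₁).aemeasurable).mpr hprod
    _ = ∫ ω, G (Z ω, V₀ ω) j * G (Z ω, V₁ ω) l ∂μ := by
        rw [← hlaw₀₁, integral_map (hZ.prodMk hV₀₁).aemeasurable hF.aestronglyMeasurable]

end ProbabilityTheory

section LatentArray

variable {Ω ι γ N : Type*} {mΩ : MeasurableSpace Ω} {μ : Measure Ω} [IsProbabilityMeasure μ]
  [DecidableEq ι] {mγ : MeasurableSpace γ} [StandardBorelSpace γ] [Nonempty γ]
  [Fintype N]

theorem integral_condExp_mul_condExp_eq_integral_mul_of_shared_index {p : Type*} [Fintype p]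
    {U : Finset ι → Ω → γ} (hUmeas : ∀ A, Measurable (U A)) (hUindep : iIndepFun U μ)
    {ν : Measure γ} (hUlaw : ∀ A, μ.map (U A) = ν)
    {g : ({e : Finset N // e ≠ ∅} → γ) → p → ℝ} (hg : Measurable g)
    {i i' : N → ι} (hi : i.Injective) (hi' : i'.Injective) {k₀ : N} (hk₀ : i k₀ = i' k₀)
    (hii' : ∀ a b, i a = i' b → a = k₀)
    (hL2 : MemLp (fun ω ↦ g fun e ↦ U (e.1.image i) ω) 2 μ)
    (hL2' : MemLp (fun ω ↦ g fun e ↦ U (e.1.image i') ω) 2 μ) (j l : p) :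
    ∫ ω, μ[fun ω ↦ g fun e ↦ U (e.1.image i) ω | mγ.comap (U {i k₀})] ω j *
        μ[fun ω ↦ g fun e ↦ U (e.1.image i) ω | mγ.comap (U {i k₀})] ω l ∂μ
      = ∫ ω, (g fun e ↦ U (e.1.image i) ω) j * (g fun e ↦ U (e.1.image i') ω) l ∂μ := by
  classical
  set e₀ : {e : Finset N // e ≠ ∅} := ⟨{k₀}, Finset.singleton_ne_empty k₀⟩
  set G : γ × ({e // e ≠ e₀} → γ) → p → ℝ :=
    fun q ↦ g fun e ↦ if h : e = e₀ then q.1 else q.2 ⟨e, h⟩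
  have hG : Measurable G := hg.comp (measurable_pi_lambda _ fun e ↦ by
    by_cases h : e = e₀ <;> simp only [h, dite_true, dite_false] <;> fun_prop)
  set V : (N → ι) → Ω → {e // e ≠ e₀} → γ := fun i ω e ↦ U (e.1.1.image i) ω
  have hV : ∀ i, Measurable (V i) := fun i ↦ measurable_pi_lambda _ fun e ↦ hUmeas _
  have hsplit : ∀ (i : N → ι) ω, (g fun e ↦ U (e.1.image i) ω) = G (U {i k₀} ω, V i ω) := by
    intro i ω
    refine congrArg g (funext fun e ↦ ?_)
    by_cases h : e = e₀
    · simp [h, e₀]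
    · simp [V, h]
  have hne_e₀ : ∀ e : {e // e ≠ e₀}, e.1.1 ≠ {k₀} := fun e h ↦ e.2 (Subtype.ext h)
  have hlawV : ∀ {i : N → ι}, i.Injective → μ.map (V i) = Measure.pi fun _ ↦ ν := by
    intro i hi
    have hinj : (fun e : {e // e ≠ e₀} ↦ e.1.1.image i).Injective :=
      fun a b h ↦ Subtype.ext (Subtype.ext (Finset.image_injective hi h))
    simp only [V, hUindep.map_comp_eq_pi hUmeas hinj, hUlaw]
  have hZV : IndepFun (U {i k₀}) (fun ω ↦ (V i ω, V i' ω)) μ := by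
    refine hUindep.indepFun_prodMk_of_notMem_range hUmeas ?_ ?_
    · rintro ⟨e, he⟩
      exact hne_e₀ e (Finset.image_injective hi (by simpa using he))
    · rintro ⟨e, he⟩
      exact hne_e₀ e (Finset.image_injective hi' (by simpa [hk₀] using he))
  have hVV : IndepFun (V i) (V i') μ := by
    refine hUindep.indepFun_comp_of_disjoint_range hUmeas
      (Set.disjoint_range_iff.mpr fun e e' he ↦ hne_e₀ e ?_)
    exact Finset.eq_singleton_of_image_eq_image (Finset.nonempty_iff_ne_empty.mpr e.1.2)
      (fun a _ b _ ↦ hii' a b) he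
  simp only [hsplit, ← hk₀] at hL2 hL2' ⊢
  exact integral_condExp_mul_condExp_eq_integral_mul_of_indepFun (hUmeas _) (hV i) (hV i') hZV
    hVV (by rw [hlawV hi, hlawV hi']) hG hL2 hL2' j l

end LatentArray

theorem stmt_9_general {Ω : Type*} [MeasurableSpace Ω] (μ : Measure Ω) [IsProbabilityMeasure μ]
    (K p : ℕ) (hK : 0 < K)
    (U : Finset ℕ → Ω → ℝ)
    (hUmeas : ∀ A, Measurable (U A))
    (hUindep : iIndepFun U μ)
    (hUunif : ∀ A, Measure.map (U A) μ = volume.restrict (Set.Icc (0 : ℝ) 1))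
    (g : ({e : Finset (Fin K) // e ≠ ∅} → ℝ) → (Fin p → ℝ)) (hg : Measurable g)
    (X : (Fin K → ℕ) → Ω → (Fin p → ℝ))
    (hXdef : ∀ i, X i = fun ω => g (fun e => U (e.1.image i) ω))
    (hXL2 : ∀ i, MemLp (X i) 2 μ)
    (hXsym : ∀ i (σ : Equiv.Perm (Fin K)), X (i ∘ σ) = X i) :
    ∀ j l : Fin p,
      (∫ ω,
        ((∑ k : Fin K,
          μ[X (fun s => ((Equiv.swap (⟨0, hK⟩ : Fin K) k) s : Fin K).val + 1) |
            MeasurableSpace.comap (U {1}) (borel ℝ)]) ω j) *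
        ((∑ k : Fin K,
          μ[X (fun s => ((Equiv.swap (⟨0, hK⟩ : Fin K) k) s : Fin K).val + 1) |
            MeasurableSpace.comap (U {1}) (borel ℝ)]) ω l) ∂μ)
      = (K : ℝ) ^ 2 *
        ∫ ω,
          (((K.factorial : ℝ)⁻¹ •
              ∑ σ : Equiv.Perm (Fin K), X ((fun s : Fin K => (s : ℕ) + 1) ∘ σ) ω) j) *
          (((K.factorial : ℝ)⁻¹ •
              ∑ σ : Equiv.Perm (Fin K),
                X ((fun s : Fin K => if (s : ℕ) = 0 then 1 else K + (s : ℕ)) ∘ σ) ω) l)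
          ∂μ := by
  intro j l
  set i₀ : Fin K → ℕ := fun s ↦ (s : ℕ) + 1
  set i₁ : Fin K → ℕ := fun s ↦ if (s : ℕ) = 0 then 1 else K + (s : ℕ)
  have hi₀ : i₀.Injective := fun a b h ↦ Fin.ext (by simpa [i₀] using h)
  have hi₁ : i₁.Injective := fun a b h ↦ Fin.ext <| by
    simp only [i₁] at h; split_ifs at h <;> omega
  have hshared : ∀ a b, i₀ a = i₁ b → a = ⟨0, hK⟩ := fun a b h ↦ by
    simp only [i₀, i₁] at h; split_ifs at h <;> ext <;> simp <;> omega
  have hXswap : ∀ k, X (fun s ↦ ((Equiv.swap (⟨0, hK⟩ : Fin K) k) s : ℕ) + 1) = X i₀ :=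
    fun k ↦ hXsym i₀ _
  have hfact : (K.factorial : ℝ) ≠ 0 := Nat.cast_ne_zero.mpr K.factorial_ne_zero
  simp only [hXswap, hXsym, Finset.sum_const, Finset.card_univ, Fintype.card_fin,
    Fintype.card_perm, ← Nat.cast_smul_eq_nsmul ℝ, inv_mul_cancel_left₀ hfact,
    Pi.smul_apply, smul_eq_mul, mul_mul_mul_comm _ _ (K : ℝ), ← sq, integral_const_mul]
  rw [hXdef i₀, hXdef i₁]
  exact congrArg _ (integral_condExp_mul_condExp_eq_integral_mul_of_shared_index hUmeas hUindep
    hUunif hg hi₀ hi₁ rfl hshared (hXdef i₀ ▸ hXL2 i₀) (hXdef i₁ ▸ hXL2 i₁) j l)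

/-- Identification of the Hájek-projection covariance for jointly exchangeable arrays with
Silverman's (1976) expression.  The array `X_i = g((U_{{i⊙e}⁺})_{e∈{0,1}^K\{0}})` is
generated from i.i.d. `U[0,1]` latent variables indexed by finite subsets of ℕ (the value
of `g` at `e` being the latent variable attached to the image `{i⊙e}⁺ = i(e)` of the index
tuple on the support of `e`); `X` is mean zero, square integrable and symmetric in the
components of its index.  With `W₁ = Σ_{k} E[X_{(1,…,K)} | U_k = ·](U_1)`, realized as
`Σ_k E[X ∘ (swap of positions 0 and k applied to (1,…,K)) | σ(U_{{1}})]`, and the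
symmetrization `X̌_i = (K!)⁻¹ Σ_σ X_{i∘σ}`, one has, entrywise,
`E[W₁ W₁ᵀ] = K² E[X̌_{(1,…,K)} X̌_{(1,K+1,…,2K)}ᵀ]`. -/
theorem stmt_9 {Ω : Type*} [MeasurableSpace Ω] (μ : Measure Ω) [IsProbabilityMeasure μ]
    (K p : ℕ) (hK : 0 < K)
    (U : Finset ℕ → Ω → ℝ)
    (hUmeas : ∀ A, Measurable (U A))
    (hUindep : iIndepFun U μ)
    (hUunif : ∀ A, Measure.map (U A) μ = volume.restrict (Set.Icc (0 : ℝ) 1))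
    (g : ({e : Finset (Fin K) // e ≠ ∅} → ℝ) → (Fin p → ℝ)) (hg : Measurable g)
    (X : (Fin K → ℕ) → Ω → (Fin p → ℝ))
    (hXdef : ∀ i, X i = fun ω => g (fun e => U (e.1.image i) ω))
    (hXL2 : ∀ i, MemLp (X i) 2 μ)
    (hXmean : ∀ i, Function.Injective i → (∫ ω, X i ω ∂μ) = 0)
    (hXsym : ∀ i (σ : Equiv.Perm (Fin K)), X (i ∘ σ) = X i) :
    ∀ j l : Fin p,
      (∫ ω,
        ((∑ k : Fin K,
          μ[X (fun s => ((Equiv.swap (⟨0, hK⟩ : Fin K) k) s : Fin K).val + 1) |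
            MeasurableSpace.comap (U {1}) (borel ℝ)]) ω j) *
        ((∑ k : Fin K,
          μ[X (fun s => ((Equiv.swap (⟨0, hK⟩ : Fin K) k) s : Fin K).val + 1) |
            MeasurableSpace.comap (U {1}) (borel ℝ)]) ω l) ∂μ)
      = (K : ℝ) ^ 2 *
        ∫ ω,
          (((K.factorial : ℝ)⁻¹ •
              ∑ σ : Equiv.Perm (Fin K), X ((fun s : Fin K => (s : ℕ) + 1) ∘ σ) ω) j) *
          (((K.factorial : ℝ)⁻¹ •
              ∑ σ : Equiv.Perm (Fin K),
                X ((fun s : Fin K => if (s : ℕ) = 0 then 1 else K + (s : ℕ)) ∘ σ) ω) l)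
          ∂μ :=
  stmt_9_general μ K p hK U hUmeas hUindep hUunif g hg X hXdef hXL2 hXsym
end

section
/- Let X be an N×p real matrix with rows indexed by a finite set of size N, and for θ ∈ ℝ^p let ‖Xθ‖_{N,2}² = N^{-1} Σ_i (x_i^T θ)². Define the s-sparse minimal singular value φ_min(s) = min{‖Xθ‖_{N,2} : ‖θ‖_0 ≤ s, ‖θ‖ = 1} and ρ̂ = max_{1≤ℓ≤p} N^{-1} Σ_i (x_i^ℓ)². Suppose φ_min(s) ≥ φ_1 > 0 for some 2 ≤ s ≤ p. Then for all θ ∈ ℝ^p: ‖Xθ‖²_{N,2} ≥ φ_1² ‖θ‖² − ‖θ‖_1² ρ̂ / (s−1). Consequently, for any c_0 ≥ 1 and any positive integer s_1 ≤ (s−1)φ_1²/(2(1+c_0)² ρ̂), the restricted eigenvalue satisfies κ(s_1, c_0) ≥ φ_1/√2. -/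
/-!
Maurey's empirical method. Put `t = ‖θ‖₁`, draw `s` indices independently with `P(j) = |θ_j|/t`,
and let `V` be the sum of the drawn vectors `±t e_j` (sign of `θ_j`). Then `V` is `s`-sparse, and
expanding the squares gives `E‖V‖² = s t² + s(s-1)‖θ‖²` and
`E‖XV‖²_{N,2} = s t² ∑ⱼ P(j) ‖Xe_j‖²_{N,2} + s(s-1)‖Xθ‖²_{N,2} ≤ s t² ρ̂ + s(s-1)‖Xθ‖²_{N,2}`.
Taking expectations in `φ₁²‖V‖² ≤ ‖XV‖²_{N,2}` and dividing by `s(s-1)` gives the first bound.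
On the cone, `‖θ‖₁² ≤ (1+c₀)²‖θ_J‖₁² ≤ (1+c₀)² s₁ ‖θ‖²`, so the choice of `s₁` turns it into
`‖Xθ‖²_{N,2} ≥ φ₁²‖θ‖²/2 ≥ φ₁²‖θ_J‖₁²/(2 s₁)`.
-/

open Finset

section Sampling

variable {α : Type*} [Fintype α] {s : ℕ}

noncomputable def iidMean (μ : α → ℝ) (g : (Fin s → α) → ℝ) : ℝ :=
  ∑ w, (∏ a, μ (w a)) * g w

theorem iidMean_sum {κ : Type*} (μ : α → ℝ) (K : Finset κ) (g : κ → (Fin s → α) → ℝ) :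
    iidMean μ (fun w => ∑ k ∈ K, g k w) = ∑ k ∈ K, iidMean μ (g k) := by
  simp only [iidMean, mul_sum]
  exact sum_comm

theorem iidMean_const_mul (μ : α → ℝ) (c : ℝ) (g : (Fin s → α) → ℝ) :
    iidMean μ (fun w => c * g w) = c * iidMean μ g := by
  simp only [iidMean, mul_sum, mul_left_comm]

theorem iidMean_mono {μ : α → ℝ} (hμ : ∀ j, 0 ≤ μ j) {g h : (Fin s → α) → ℝ}
    (hgh : ∀ w, g w ≤ h w) : iidMean μ g ≤ iidMean μ h :=
  sum_le_sum fun w _ => mul_le_mul_of_nonneg_left (hgh w) (prod_nonneg fun _ _ => hμ _)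

theorem iidMean_prod (μ : α → ℝ) (g : Fin s → α → ℝ) :
    iidMean μ (fun w => ∏ a, g a (w a)) = ∏ a, ∑ j, μ j * g a j := by
  simp only [iidMean, ← prod_mul_distrib, Fintype.prod_sum]

theorem iidMean_apply {μ : α → ℝ} (hμ : ∑ j, μ j = 1) (f : α → ℝ) (ι : Fin s) :
    iidMean μ (fun w => f (w ι)) = ∑ j, μ j * f j := by
  simpa [hμ] using iidMean_prod μ (fun a j => if a = ι then f j else 1)

theorem iidMean_apply_mul_apply {μ : α → ℝ} (hμ : ∑ j, μ j = 1) (f g : α → ℝ) (ι ι' : Fin s) :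
    iidMean μ (fun w => f (w ι) * g (w ι')) =
      if ι = ι' then ∑ j, μ j * (f j * g j) else (∑ j, μ j * f j) * ∑ j, μ j * g j := by
  split_ifs with h
  · subst h
    exact iidMean_apply hμ (fun j => f j * g j) ι
  · have key := iidMean_prod μ (fun a j => (if a = ι then f j else 1) * if a = ι' then g j else 1)
    simp only [prod_mul_distrib, prod_ite_eq', mem_univ, if_true] at key
    rw [key]
    have factor : ∀ a, ∑ j, μ j * ((if a = ι then f j else 1) * if a = ι' then g j else 1) =
        (if a = ι then ∑ j, μ j * f j else 1) * if a = ι' then ∑ j, μ j * g j else 1 := by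
      intro a
      by_cases ha : a = ι
      · simp [ha, h]
      · by_cases ha' : a = ι' <;> simp [ha, ha', hμ, Ne.symm h]
    simp only [factor, prod_mul_distrib, prod_ite_eq', mem_univ, if_true]

theorem iidMean_sum_sq {μ : α → ℝ} (hμ : ∑ j, μ j = 1) (f : α → ℝ) :
    iidMean μ (fun w : Fin s → α => (∑ ι, f (w ι)) ^ 2) =
      s * ∑ j, μ j * f j ^ 2 + ((s : ℝ) ^ 2 - s) * (∑ j, μ j * f j) ^ 2 := by
  simp only [sq, sum_mul_sum, iidMean_sum, iidMean_apply_mul_apply hμ]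
  have ite_eq_add (ι ι' : Fin s) (A B : ℝ) :
      (if ι = ι' then A else B) = B + if ι = ι' then A - B else 0 := by
    split_ifs <;> ring
  simp only [ite_eq_add _ _ (∑ j, μ j * (f j * f j)), sum_add_distrib, sum_ite_eq, mem_univ, if_true,
    sum_const, card_univ, Fintype.card_fin, nsmul_eq_mul]
  ring

end Sampling

section SampleVec

variable {α : Type*} [DecidableEq α] {s : ℕ}

noncomputable def sampleVec (u : α → ℝ) (w : Fin s → α) : α → ℝ :=
  ∑ ι, Pi.single (w ι) (u (w ι))

theorem sum_mul_sampleVec [Fintype α] (a u : α → ℝ) (w : Fin s → α) :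
    ∑ j, a j * sampleVec u w j = ∑ ι, a (w ι) * u (w ι) := by
  simp only [sampleVec, Finset.sum_apply, mul_sum]
  rw [sum_comm]
  simp [Pi.single_apply]

theorem ncard_sampleVec_ne_zero_le (u : α → ℝ) (w : Fin s → α) :
    {j | sampleVec u w j ≠ 0}.ncard ≤ s := by
  have support : {j | sampleVec u w j ≠ 0} ⊆ Set.range w := by
    intro j hj
    by_contra hj'
    simp only [Set.mem_range, not_exists] at hj'
    simp only [Set.mem_ofPred_eq, sampleVec, Finset.sum_apply] at hj
    exact hj (sum_eq_zero fun ι _ => Pi.single_eq_of_ne (Ne.symm (hj' ι)) _)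
  calc _ ≤ (Set.range w).ncard := Set.ncard_le_ncard support (Set.finite_range w)
    _ ≤ (Set.univ : Set (Fin s)).ncard := by
      rw [← Set.image_univ]
      exact Set.ncard_image_le Set.finite_univ
    _ = s := by simp [Set.ncard_univ]

theorem iidMean_sum_sq_sum_mul_sampleVec [Fintype α] {κ : Type*} [Fintype κ] {μ : α → ℝ}
    (hμ : ∑ j, μ j = 1) (A : κ → α → ℝ) (u : α → ℝ) :
    iidMean μ (fun w : Fin s → α => ∑ k, (∑ j, A k j * sampleVec u w j) ^ 2) =
      s * ∑ j, μ j * u j ^ 2 * ∑ k, A k j ^ 2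
        + ((s : ℝ) ^ 2 - s) * ∑ k, (∑ j, A k j * (μ j * u j)) ^ 2 := by
  have row (k : κ) := iidMean_sum_sq (s := s) hμ (fun j => A k j * u j)
  simp only [sum_mul_sampleVec, iidMean_sum, row, sum_add_distrib, ← mul_sum]
  congr 2
  · rw [sum_comm]
    exact sum_congr rfl fun j _ => by rw [mul_sum]; exact sum_congr rfl fun k _ => by ring
  · exact sum_congr rfl fun k _ => by congr 1; exact sum_congr rfl fun j _ => by ring

end SampleVec

section Empirical

variable {α : Type*} [Fintype α] {N : ℕ}

noncomputable def empiricalSqNorm (x : Fin N → α → ℝ) (θ : α → ℝ) : ℝ :=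
  (N : ℝ)⁻¹ * ∑ i, (∑ j, x i j * θ j) ^ 2

theorem empiricalSqNorm_nonneg (x : Fin N → α → ℝ) (θ : α → ℝ) : 0 ≤ empiricalSqNorm x θ := by
  unfold empiricalSqNorm; positivity

theorem empiricalSqNorm_smul (x : Fin N → α → ℝ) (c : ℝ) (θ : α → ℝ) :
    empiricalSqNorm x (c • θ) = c ^ 2 * empiricalSqNorm x θ := by
  simp only [empiricalSqNorm, Pi.smul_apply, smul_eq_mul, mul_left_comm _ c, ← mul_sum, mul_pow]
  ring

theorem sq_mul_sum_sq_le_empiricalSqNorm_of_unit (x : Fin N → α → ℝ) {φ : ℝ} (hφ : 0 ≤ φ)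
    {P : (α → ℝ) → Prop} (hP : ∀ c ≠ (0 : ℝ), ∀ v, P v → P (c • v))
    (hunit : ∀ θ, P θ → ∑ j, θ j ^ 2 = 1 → φ ≤ √(empiricalSqNorm x θ))
    (v : α → ℝ) (hv : P v) : φ ^ 2 * ∑ j, v j ^ 2 ≤ empiricalSqNorm x v := by
  set r := √(∑ j, v j ^ 2)
  have hr2 : r ^ 2 = ∑ j, v j ^ 2 := Real.sq_sqrt (by positivity)
  obtain hr | hr : r = 0 ∨ 0 < r := (Real.sqrt_nonneg _).eq_or_lt'
  · simpa [← hr2, hr] using empiricalSqNorm_nonneg x v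
  have hnorm : ∑ j, (r⁻¹ • v) j ^ 2 = 1 := by
    simp only [Pi.smul_apply, smul_eq_mul, mul_pow, ← mul_sum, ← hr2]
    field_simp
  have h := hunit _ (hP _ (inv_ne_zero hr.ne') v hv) hnorm
  rw [Real.le_sqrt hφ (empiricalSqNorm_nonneg _ _), empiricalSqNorm_smul] at h
  calc φ ^ 2 * ∑ j, v j ^ 2 ≤ r⁻¹ ^ 2 * empiricalSqNorm x v * r ^ 2 := by
        rw [← hr2]; exact mul_le_mul_of_nonneg_right h (sq_nonneg r)
    _ = empiricalSqNorm x v := by field_simp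

variable [DecidableEq α] {s : ℕ} {μ : α → ℝ}

theorem iidMean_sum_sq_sampleVec (hμ : ∑ j, μ j = 1) (u : α → ℝ) :
    iidMean μ (fun w : Fin s → α => ∑ j, sampleVec u w j ^ 2) =
      s * ∑ j, μ j * u j ^ 2 + ((s : ℝ) ^ 2 - s) * ∑ j, (μ j * u j) ^ 2 := by
  simpa [Matrix.one_apply] using iidMean_sum_sq_sum_mul_sampleVec (s := s) hμ (1 : Matrix α α ℝ) u

theorem iidMean_empiricalSqNorm_sampleVec (hμ : ∑ j, μ j = 1) (x : Fin N → α → ℝ) (u : α → ℝ) :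
    iidMean μ (fun w : Fin s → α => empiricalSqNorm x (sampleVec u w)) =
      s * ∑ j, μ j * u j ^ 2 * ((N : ℝ)⁻¹ * ∑ i, x i j ^ 2)
        + ((s : ℝ) ^ 2 - s) * empiricalSqNorm x (fun j => μ j * u j) := by
  simp only [empiricalSqNorm, iidMean_const_mul, iidMean_sum_sq_sum_mul_sampleVec hμ]
  simp only [mul_left_comm _ (N : ℝ)⁻¹, ← mul_sum]
  ring

theorem maurey_sparse_bound (x : Fin N → α → ℝ) {φ ρ : ℝ}
    (hρ : ∀ j, (N : ℝ)⁻¹ * ∑ i, x i j ^ 2 ≤ ρ)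
    (hsparse : ∀ v : α → ℝ, {j | v j ≠ 0}.ncard ≤ s → φ ^ 2 * ∑ j, v j ^ 2 ≤ empiricalSqNorm x v)
    {θ : α → ℝ} (ht : 0 < ∑ j, |θ j|) :
    φ ^ 2 * (s * (∑ j, |θ j|) ^ 2 + ((s : ℝ) ^ 2 - s) * ∑ j, θ j ^ 2)
      ≤ s * (∑ j, |θ j|) ^ 2 * ρ + ((s : ℝ) ^ 2 - s) * empiricalSqNorm x θ := by
  set t := ∑ j, |θ j|
  set μ : α → ℝ := fun j => |θ j| / t
  set u : α → ℝ := fun j => if θ j < 0 then -t else t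
  have hμ0 : ∀ j, 0 ≤ μ j := fun j => div_nonneg (abs_nonneg _) ht.le
  have hμ1 : ∑ j, μ j = 1 := by rw [← sum_div, div_self ht.ne']
  have hμu : (fun j => μ j * u j) = θ := by
    ext j
    by_cases hj : θ j < 0
    · simp [μ, u, hj, abs_of_neg hj, ht.ne']
    · simp [μ, u, hj, abs_of_nonneg (not_lt.mp hj), ht.ne']
  have hu : ∀ j, u j ^ 2 = t ^ 2 := fun j => by by_cases hj : θ j < 0 <;> simp [u, hj]
  have hcol : ∑ j, μ j * u j ^ 2 * ((N : ℝ)⁻¹ * ∑ i, x i j ^ 2) ≤ t ^ 2 * ρ :=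
    calc _ ≤ ∑ j, μ j * u j ^ 2 * ρ :=
          sum_le_sum fun j _ => mul_le_mul_of_nonneg_left (hρ j) (by positivity)
      _ = t ^ 2 * ρ := by simp only [hu, ← sum_mul, hμ1, one_mul]
  calc φ ^ 2 * (s * t ^ 2 + ((s : ℝ) ^ 2 - s) * ∑ j, θ j ^ 2)
      = iidMean μ (fun w : Fin s → α => φ ^ 2 * ∑ j, sampleVec u w j ^ 2) := by
        rw [iidMean_const_mul, iidMean_sum_sq_sampleVec hμ1, ← hμu]
        simp [hu, ← sum_mul, hμ1]
    _ ≤ iidMean μ (fun w : Fin s → α => empiricalSqNorm x (sampleVec u w)) :=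
        iidMean_mono hμ0 fun w => hsparse _ (ncard_sampleVec_ne_zero_le u w)
    _ ≤ s * t ^ 2 * ρ + ((s : ℝ) ^ 2 - s) * empiricalSqNorm x θ := by
        rw [iidMean_empiricalSqNorm_sampleVec hμ1, hμu]
        have := mul_le_mul_of_nonneg_left hcol (Nat.cast_nonneg s)
        linarith

theorem sq_mul_sum_sq_sub_le_empiricalSqNorm (x : Fin N → α → ℝ) {φ ρ : ℝ} (hs : 2 ≤ s)
    (hρ : ∀ j, (N : ℝ)⁻¹ * ∑ i, x i j ^ 2 ≤ ρ)
    (hsparse : ∀ v : α → ℝ, {j | v j ≠ 0}.ncard ≤ s → φ ^ 2 * ∑ j, v j ^ 2 ≤ empiricalSqNorm x v)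
    (θ : α → ℝ) :
    φ ^ 2 * ∑ j, θ j ^ 2 - (∑ j, |θ j|) ^ 2 * ρ / ((s : ℝ) - 1) ≤ empiricalSqNorm x θ := by
  obtain ht | ht : ∑ j, |θ j| = 0 ∨ 0 < ∑ j, |θ j| :=
    (sum_nonneg fun j _ => abs_nonneg (θ j)).eq_or_lt'
  · obtain rfl : θ = 0 := funext fun j =>
      abs_eq_zero.mp ((sum_eq_zero_iff_of_nonneg fun j _ => abs_nonneg _).mp ht j (mem_univ j))
    simpa using empiricalSqNorm_nonneg x 0
  have hmean := maurey_sparse_bound x hρ hsparse ht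
  have hs1 : (0 : ℝ) < s - 1 := sub_pos.mpr (Nat.one_lt_cast.mpr hs)
  rw [show (s : ℝ) ^ 2 - s = s * (s - 1) by ring] at hmean
  rw [sub_le_iff_le_add]
  refine le_of_mul_le_mul_left ?_ (by positivity : (0 : ℝ) < s * (s - 1))
  calc (s * (s - 1) : ℝ) * (φ ^ 2 * ∑ j, θ j ^ 2)
      ≤ s * (s - 1) * empiricalSqNorm x θ + s * (∑ j, |θ j|) ^ 2 * ρ := by
        nlinarith [mul_nonneg (mul_nonneg (sq_nonneg φ) (Nat.cast_nonneg s))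
          (sq_nonneg (∑ j, |θ j|))]
    _ = s * (s - 1) * (empiricalSqNorm x θ + (∑ j, |θ j|) ^ 2 * ρ / (s - 1)) := by
        field_simp

end Empirical

section RestrictedEigenvalue

variable {α : Type*} [Fintype α]

theorem sq_sum_abs_le_card_mul_sum_sq (θ : α → ℝ) (J : Finset α) :
    (∑ j ∈ J, |θ j|) ^ 2 ≤ J.card * ∑ j, θ j ^ 2 :=
  calc (∑ j ∈ J, |θ j|) ^ 2 ≤ J.card * ∑ j ∈ J, |θ j| ^ 2 := sq_sum_le_card_mul_sum_sq
    _ ≤ J.card * ∑ j, θ j ^ 2 := by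
      simp only [sq_abs]
      gcongr
      exact subset_univ J

variable [DecidableEq α]

theorem sq_sum_abs_le_of_cone {c : ℝ} (θ : α → ℝ) (J : Finset α)
    (hcone : ∑ j ∈ Jᶜ, |θ j| ≤ c * ∑ j ∈ J, |θ j|) :
    (∑ j, |θ j|) ^ 2 ≤ (1 + c) ^ 2 * (∑ j ∈ J, |θ j|) ^ 2 := by
  rw [← mul_pow]
  refine pow_le_pow_left₀ (sum_nonneg fun j _ => abs_nonneg _) ?_ 2
  rw [← sum_add_sum_compl J]
  linarith

theorem div_sqrt_two_mul_sum_abs_le_of_cone {φ ρ c d Q : ℝ} {s₁ : ℕ} (hφ : 0 ≤ φ) (hρ : 0 ≤ ρ)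
    (hd : 0 < d) (hs₁ : (s₁ : ℝ) ≤ d * φ ^ 2 / (2 * (1 + c) ^ 2 * ρ)) {θ : α → ℝ}
    (hQ : φ ^ 2 * ∑ j, θ j ^ 2 - (∑ j, |θ j|) ^ 2 * ρ / d ≤ Q) {J : Finset α} (hJ : J.card ≤ s₁)
    (hcone : ∑ j ∈ Jᶜ, |θ j| ≤ c * ∑ j ∈ J, |θ j|) :
    φ / √2 * ∑ j ∈ J, |θ j| ≤ √s₁ * √Q := by
  set T := ∑ j, θ j ^ 2
  set SJ := ∑ j ∈ J, |θ j|
  have hT : 0 ≤ T := by positivity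
  have hSJ : SJ ^ 2 ≤ s₁ * T :=
    (sq_sum_abs_le_card_mul_sum_sq θ J).trans (by gcongr)
  have hs₁' : s₁ * (2 * (1 + c) ^ 2 * ρ) ≤ d * φ ^ 2 := by
    rcases (by positivity : 0 ≤ 2 * (1 + c) ^ 2 * ρ).eq_or_lt' with h | h
    · rw [h, mul_zero]; positivity
    · exact (le_div_iff₀ h).mp hs₁
  have hhalf : φ ^ 2 / 2 * T ≤ Q := by
    have : (∑ j, |θ j|) ^ 2 * ρ / d ≤ φ ^ 2 * T / 2 := by
      rw [div_le_iff₀ hd]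
      calc (∑ j, |θ j|) ^ 2 * ρ ≤ (1 + c) ^ 2 * (s₁ * T) * ρ := by
            gcongr
            exact (sq_sum_abs_le_of_cone θ J hcone).trans (by gcongr)
        _ = s₁ * (2 * (1 + c) ^ 2 * ρ) * T / 2 := by ring
        _ ≤ d * φ ^ 2 * T / 2 := by gcongr
        _ = φ ^ 2 * T / 2 * d := by ring
    linarith
  have hQ0 : 0 ≤ Q := le_trans (by positivity) hhalf
  rw [← Real.sqrt_mul (Nat.cast_nonneg _), Real.le_sqrt (by positivity) (by positivity), mul_pow,
    div_pow, Real.sq_sqrt zero_le_two]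
  calc φ ^ 2 / 2 * SJ ^ 2 ≤ φ ^ 2 / 2 * (s₁ * T) := by gcongr
    _ = s₁ * (φ ^ 2 / 2 * T) := by ring
    _ ≤ s₁ * Q := by gcongr

end RestrictedEigenvalue

theorem stmt_13_general (N p s : ℕ) (hs2 : 2 ≤ s)
    (x : Fin N → Fin p → ℝ) (φ₁ : ℝ) (hφ₁ : 0 < φ₁)
    (hφ : ∀ θ : Fin p → ℝ, Set.ncard {j | θ j ≠ 0} ≤ s → (∑ j, θ j ^ 2) = 1 →
      φ₁ ≤ Real.sqrt ((N : ℝ)⁻¹ * ∑ i, (∑ j, x i j * θ j) ^ 2)) :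
    (∀ θ : Fin p → ℝ,
      φ₁ ^ 2 * (∑ j, θ j ^ 2)
          - (∑ j, |θ j|) ^ 2 * (⨆ ℓ : Fin p, (N : ℝ)⁻¹ * ∑ i, (x i ℓ) ^ 2) / ((s : ℝ) - 1)
        ≤ (N : ℝ)⁻¹ * ∑ i, (∑ j, x i j * θ j) ^ 2) ∧
    (∀ c₀ : ℝ, 1 ≤ c₀ → ∀ s₁ : ℕ, 0 < s₁ →
      (s₁ : ℝ) ≤ ((s : ℝ) - 1) * φ₁ ^ 2
          / (2 * (1 + c₀) ^ 2 * (⨆ ℓ : Fin p, (N : ℝ)⁻¹ * ∑ i, (x i ℓ) ^ 2)) →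
      ∀ J : Finset (Fin p), 1 ≤ J.card → J.card ≤ s₁ →
      ∀ θ : Fin p → ℝ, θ ≠ 0 → (∑ j ∈ Jᶜ, |θ j|) ≤ c₀ * ∑ j ∈ J, |θ j| →
      (φ₁ / Real.sqrt 2) * (∑ j ∈ J, |θ j|)
        ≤ Real.sqrt (s₁ : ℝ) * Real.sqrt ((N : ℝ)⁻¹ * ∑ i, (∑ j, x i j * θ j) ^ 2)) := by
  set ρ := ⨆ ℓ : Fin p, (N : ℝ)⁻¹ * ∑ i, (x i ℓ) ^ 2
  have hρ : ∀ ℓ, (N : ℝ)⁻¹ * ∑ i, (x i ℓ) ^ 2 ≤ ρ := le_ciSup (Set.finite_range _).bddAbove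
  have hρ0 : 0 ≤ ρ := Real.iSup_nonneg fun ℓ => by positivity
  have hsparse := sq_mul_sum_sq_le_empiricalSqNorm_of_unit x hφ₁.le
    (P := fun v => {j | v j ≠ 0}.ncard ≤ s) (fun c hc v hv => by simpa [hc] using hv) hφ
  have hs1 : (0 : ℝ) < s - 1 := sub_pos.mpr (Nat.one_lt_cast.mpr hs2)
  have hlower := sq_mul_sum_sq_sub_le_empiricalSqNorm x hs2 hρ hsparse
  exact ⟨hlower, fun c₀ _ s₁ _ hs₁ J _ hJ θ _ hcone =>
    div_sqrt_two_mul_sum_abs_le_of_cone hφ₁.le hρ0 hs1 hs₁ (hlower θ) hJ hcone⟩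

/-- Deterministic core of the restricted-eigenvalue bound (Lecué–Mendelson /
Proposition 4.3 of the paper).  If the `s`-sparse minimal singular value of the
design is at least `φ₁ > 0`, then `‖Xθ‖²_{N,2} ≥ φ₁²‖θ‖² − ‖θ‖₁² ρ̂/(s−1)` for all θ,
and consequently the restricted eigenvalue `κ(s₁, c₀)` is at least `φ₁/√2` whenever
`s₁ ≤ (s−1)φ₁²/(2(1+c₀)² ρ̂)`. -/
theorem stmt_13 (N p s : ℕ) (hN : 0 < N) (hp : 0 < p) (hs2 : 2 ≤ s) (hsp : s ≤ p)
    (x : Fin N → Fin p → ℝ) (φ₁ : ℝ) (hφ₁ : 0 < φ₁)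
    (hφ : ∀ θ : Fin p → ℝ, Set.ncard {j | θ j ≠ 0} ≤ s → (∑ j, θ j ^ 2) = 1 →
      φ₁ ≤ Real.sqrt ((N : ℝ)⁻¹ * ∑ i, (∑ j, x i j * θ j) ^ 2)) :
    (∀ θ : Fin p → ℝ,
      φ₁ ^ 2 * (∑ j, θ j ^ 2)
          - (∑ j, |θ j|) ^ 2 * (⨆ ℓ : Fin p, (N : ℝ)⁻¹ * ∑ i, (x i ℓ) ^ 2) / ((s : ℝ) - 1)
        ≤ (N : ℝ)⁻¹ * ∑ i, (∑ j, x i j * θ j) ^ 2) ∧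
    (∀ c₀ : ℝ, 1 ≤ c₀ → ∀ s₁ : ℕ, 0 < s₁ →
      (s₁ : ℝ) ≤ ((s : ℝ) - 1) * φ₁ ^ 2
          / (2 * (1 + c₀) ^ 2 * (⨆ ℓ : Fin p, (N : ℝ)⁻¹ * ∑ i, (x i ℓ) ^ 2)) →
      ∀ J : Finset (Fin p), 1 ≤ J.card → J.card ≤ s₁ →
      ∀ θ : Fin p → ℝ, θ ≠ 0 → (∑ j ∈ Jᶜ, |θ j|) ≤ c₀ * ∑ j ∈ J, |θ j| →
      (φ₁ / Real.sqrt 2) * (∑ j ∈ J, |θ j|)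
        ≤ Real.sqrt (s₁ : ℝ) * Real.sqrt ((N : ℝ)⁻¹ * ∑ i, (∑ j, x i j * θ j) ^ 2)) :=
  stmt_13_general N p s hs2 x φ₁ hφ₁ hφ
end
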